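/- arXiv:1809.06912 — 4 statements merged into one kernel-verified Lean document; each statement's English description precedes it below -/
import Mathlib

section
/- Let a₁ < a₂ < a₃ < a₄ < a₅ be integers. For i = 1, …, 4, let v_i be (−1)^i times the determinant of the 3×3 matrix obtained from the 4×3 matrix (a_j^k)_{1≤j≤4, 0≤k≤2} by deleting the j = i row; for i = 1, …, 4, let ṽ_{i+1} be (−1)^i times the determinant of the 3×3 matrix obtained from the 4×3 matrix (a_{j+1}^k)_{1≤j≤4, 0≤k≤2} by deleting the j = i row. Then for every ε > 0 there exists L₀ such that for every integer L ≥ L₀ there exists a set Λ ⊆ {0, 1, …, L−1} with |Λ| > L^{1−ε} such that the only b₁, …, b₅ ∈ Λ satisfying both v₁b₁ + v₂b₂ + v₃b₃ + v₄b₄ = 0 and ṽ₂b₂ + ṽ₃b₃ + ṽ₄b₄ + ṽ₅b₅ = 0 satisfy b₁ = b₂ = b₃ = b₄ = b₅. -/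
/-!
Behrend's construction. Take for `Λ` the base-`q` expansions of the points of a sphere
`∑ₜ yₜ² = R` in the box `[0, m)ⁿ`, with `q` so large compared with `m` and the coefficients that
both linear relations hold digit by digit. The coefficient vectors are signed maximal minors of
Vandermonde matrices, so they annihilate the values of every quadratic polynomial; for each
digit `t` the two relations then force `(y₁ₜ, …, y₅ₜ)` to be the values of a quadratic `Pₜ` at
`a₁, …, a₅`. Now `∑ₜ Pₜ² - R` is a quartic with five roots, hence zero, and a sum of squares of
polynomials can only be constant if every summand is, so all five points coincide.
By pigeonhole some sphere contains at least `mⁿ / (n m²)` points; with `q = K m` for a constant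
`K` exceeding the total size of the coefficients and `m = K ^ s`, `s ≈ 3 / ε`, this beats
`L ^ (1 - ε)`.
-/

open Finset Polynomial

section SignedVandermondeMinor

variable {R : Type*} [CommRing R] {n : ℕ}

def signedVandermondeMinor (f : Fin (n + 1) → R) (i : Fin (n + 1)) : R :=
  (-1) ^ ((i : ℕ) + 1) * (Matrix.vandermonde (f ∘ i.succAbove)).det

@[norm_cast]
lemma Int.cast_signedVandermondeMinor (f : Fin (n + 1) → ℤ) (i : Fin (n + 1)) :
    ((signedVandermondeMinor f i : ℤ) : R) = signedVandermondeMinor (fun j => (f j : R)) i := by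
  simp only [signedVandermondeMinor, Int.cast_mul, Int.cast_pow, Int.cast_neg, Int.cast_one,
    Int.cast_det]
  congr 2
  ext j k
  simp [Matrix.vandermonde]

/-- Up to sign, the sum is the Laplace expansion along the first column of a matrix whose columns
are `f ^ k, f ^ 0, …, f ^ (n - 1)`, two of which coincide. -/
lemma sum_signedVandermondeMinor_mul_pow (f : Fin (n + 1) → R) {k : ℕ} (hk : k < n) :
    ∑ i, signedVandermondeMinor f i * f i ^ k = 0 := by
  let A : Matrix (Fin (n + 1)) (Fin (n + 1)) R :=
    Matrix.of fun i c => f i ^ (Fin.cons k (fun t : Fin n => (t : ℕ)) : Fin (n + 1) → ℕ) c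
  have hA : A.det = 0 :=
    Matrix.det_zero_of_column_eq (Fin.succ_ne_zero ⟨k, hk⟩).symm fun r => by
      simp only [A, Matrix.of_apply, Fin.cons_zero, Fin.cons_succ]
  rw [Matrix.det_succ_column_zero] at hA
  rw [← neg_eq_zero, ← hA, ← Finset.sum_neg_distrib]
  refine Finset.sum_congr rfl fun i _ => ?_
  simp only [signedVandermondeMinor, pow_succ, mul_neg, mul_one, Matrix.vandermonde,
    Function.comp_apply, neg_mul, neg_neg, Matrix.of_apply, Fin.cons_zero, Matrix.submatrix,
    Fin.cons_succ, A]
  ring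

lemma sum_signedVandermondeMinor_mul_eval (f : Fin (n + 1) → R) {P : R[X]}
    (hP : P.degree < n) : ∑ i, signedVandermondeMinor f i * P.eval (f i) = 0 := by
  rcases eq_or_ne P 0 with rfl | hP0
  · simp
  simp_rw [eval_eq_sum_range' ((natDegree_lt_iff_degree_lt hP0).2 hP), Finset.mul_sum]
  rw [Finset.sum_comm]
  refine Finset.sum_eq_zero fun k hk => ?_
  simp_rw [mul_left_comm _ (P.coeff k), ← Finset.mul_sum,
    sum_signedVandermondeMinor_mul_pow f (Finset.mem_range.1 hk), mul_zero]

lemma signedVandermondeMinor_ne_zero [IsDomain R] {f : Fin (n + 1) → R}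
    (hf : Function.Injective f) (i : Fin (n + 1)) : signedVandermondeMinor f i ≠ 0 :=
  mul_ne_zero (pow_ne_zero _ (neg_ne_zero.2 one_ne_zero))
    (Matrix.det_vandermonde_ne_zero_iff.2 (hf.comp Fin.succAbove_right_injective))

lemma eval_last_eq_of_sum_signedVandermondeMinor_mul_eq_zero [IsDomain R]
    {f : Fin (n + 1) → R} (hf : Function.Injective f) {P : R[X]} (hP : P.degree < n)
    {z : Fin (n + 1) → R} (hz : ∑ i, signedVandermondeMinor f i * z i = 0)
    (hinit : ∀ i : Fin n, z i.castSucc = P.eval (f i.castSucc)) :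
    z (Fin.last n) = P.eval (f (Fin.last n)) := by
  have h : ∑ i, signedVandermondeMinor f i * (z i - P.eval (f i)) = 0 := by
    simp_rw [mul_sub, Finset.sum_sub_distrib, hz, sum_signedVandermondeMinor_mul_eval f hP,
      sub_zero]
  simp_rw [Fin.sum_univ_castSucc, hinit, sub_self, mul_zero, Finset.sum_const_zero,
    zero_add] at h
  exact sub_eq_zero.1 ((mul_eq_zero.1 h).resolve_left (signedVandermondeMinor_ne_zero hf _))

lemma exists_eval_eq_of_sum_signedVandermondeMinor_mul_eq_zero {K : Type*} [Field K]
    {a : Fin (n + 2) → K} (ha : Function.Injective a) {y : Fin (n + 2) → K}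
    (h₁ : ∑ i, signedVandermondeMinor (fun i => a i.castSucc) i * y i.castSucc = 0)
    (h₂ : ∑ i, signedVandermondeMinor (fun i => a i.succ) i * y i.succ = 0) :
    ∃ P : K[X], P.degree < n ∧ ∀ i, y i = P.eval (a i) := by
  classical
  have hinj : Set.InjOn (fun i : Fin n => a i.castSucc.castSucc) (univ : Finset (Fin n)) :=
    (ha.comp ((Fin.castSucc_injective _).comp (Fin.castSucc_injective _))).injOn
  set P := Lagrange.interpolate univ (fun i : Fin n => a i.castSucc.castSucc)
    (fun i => y i.castSucc.castSucc)
  have hP : P.degree < n := by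
    simpa only [card_univ, Fintype.card_fin] using Lagrange.degree_interpolate_lt _ hinj
  have hwindow₁ : ∀ i : Fin (n + 1), y i.castSucc = P.eval (a i.castSucc) := by
    have hfirst (i : Fin n) : y i.castSucc.castSucc = P.eval (a i.castSucc.castSucc) :=
      (Lagrange.eval_interpolate_at_node (fun i => y i.castSucc.castSucc) hinj (mem_univ i)).symm
    intro i
    induction i using Fin.lastCases with
    | last =>
      exact eval_last_eq_of_sum_signedVandermondeMinor_mul_eq_zero
        (f := fun i => a i.castSucc) (ha.comp (Fin.castSucc_injective _)) hP h₁ hfirst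
    | cast i => exact hfirst i
  have hlast := eval_last_eq_of_sum_signedVandermondeMinor_mul_eq_zero
    (f := fun i => a i.succ) (ha.comp (Fin.succ_injective _)) hP h₂ fun i => by
      simpa only [Fin.succ_castSucc] using hwindow₁ i.succ
  refine ⟨P, hP, fun i => ?_⟩
  induction i using Fin.lastCases with
  | last => simpa only [Fin.succ_last] using hlast
  | cast i => exact hwindow₁ i

end SignedVandermondeMinor

section SumOfSquares

variable {K : Type*} [NormedField K] [LinearOrder K] [IsStrictOrderedRing K] [OrderTopology K]

lemma degree_le_zero_of_sum_sq_eval_eq_const {ι : Type*} {s : Finset ι} {P : ι → K[X]} {c : K}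
    (h : ∀ x, ∑ j ∈ s, (P j).eval x ^ 2 = c) {j : ι} (hj : j ∈ s) : (P j).degree ≤ 0 := by
  by_contra! hdeg
  obtain ⟨x, hx⟩ := (((P j).abs_tendsto_atTop hdeg).eventually_gt_atTop (|c| + 1)).exists
  have hle : (P j).eval x ^ 2 ≤ c :=
    h x ▸ single_le_sum (f := fun i => (P i).eval x ^ 2) (fun i _ => sq_nonneg _) hj
  nlinarith [abs_nonneg c, le_abs_self c, sq_abs ((P j).eval x)]

lemma degree_le_zero_of_sum_sq_eval_eq {ι κ : Type*} [Fintype ι] {a : ι → K}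
    (ha : Function.Injective a) {s : Finset κ} {P : κ → K[X]} {d : ℕ}
    (hP : ∀ j ∈ s, (P j).natDegree ≤ d) (hcard : 2 * d < Fintype.card ι) {c : K}
    (h : ∀ i, ∑ j ∈ s, (P j).eval (a i) ^ 2 = c) {j : κ} (hj : j ∈ s) : (P j).degree ≤ 0 := by
  have hsum : ∑ j ∈ s, P j ^ 2 = C c := by
    refine eq_of_natDegree_lt_card_of_eval_eq _ _ ha (by simpa [eval_finsetSum] using h) ?_
    rw [natDegree_C, max_eq_left (Nat.zero_le _)]
    refine lt_of_le_of_lt (natDegree_sum_le_of_forall_le _ _ fun j hj => ?_) hcard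
    exact natDegree_pow_le.trans (Nat.mul_le_mul_left 2 (hP j hj))
  refine degree_le_zero_of_sum_sq_eval_eq_const (c := c) (fun x => ?_) hj
  simpa [eval_finsetSum] using congrArg (eval x) hsum

end SumOfSquares

lemma eq_zero_of_sum_mul_pow_eq_zero {q : ℕ} :
    ∀ {n : ℕ} {c : Fin n → ℤ}, (∀ j, (c j).natAbs < q) → ∑ j, c j * (q : ℤ) ^ (j : ℕ) = 0 →
      c = 0
  | 0, _, _, _ => Subsingleton.elim _ _
  | n + 1, c, hc, h => by
    rw [Fin.sum_univ_succ, Fin.val_zero, pow_zero, mul_one] at h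
    simp_rw [Fin.val_succ, pow_succ, ← mul_assoc, ← Finset.sum_mul] at h
    set S := ∑ j : Fin n, c j.succ * (q : ℤ) ^ (j : ℕ)
    have h0 : c 0 = 0 := Int.eq_zero_of_dvd_of_natAbs_lt_natAbs (d := q)
      ⟨-S, by linear_combination h⟩ (by simpa using hc 0)
    have hS : S = 0 := (mul_eq_zero.1 (by linear_combination h - h0 : S * q = 0)).resolve_right
      (by exact_mod_cast (pos_of_gt (hc 0)).ne')
    have htail := eq_zero_of_sum_mul_pow_eq_zero (fun j => hc j.succ) hS
    ext j
    induction j using Fin.cases with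
    | zero => exact h0
    | succ j => exact congrFun htail j

namespace Behrend

lemma map_lt_pow {n d : ℕ} {x : Fin n → ℕ} (hx : ∀ i, x i < d) : map d x < d ^ n := by
  induction n with
  | zero => simp
  | succ n ih =>
    have h := ih (x := x ∘ Fin.succ) fun i => hx i.succ
    rw [map_succ', pow_succ]
    nlinarith [hx 0]

lemma sum_mul_digit_eq_zero_of_sum_mul_map_eq_zero {ι : Type*} [Fintype ι] {w : ι → ℤ}
    {m q n : ℕ} (hq : (∑ i, (w i).natAbs) * m < q) {y : ι → Fin n → ℕ} (hy : ∀ i j, y i j < m)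
    (h : ∑ i, w i * (map q (y i) : ℤ) = 0) (j : Fin n) : ∑ i, w i * (y i j : ℤ) = 0 := by
  have hbound (j : Fin n) : (∑ i, w i * (y i j : ℤ)).natAbs < q :=
    calc _ ≤ ∑ i, (w i * y i j).natAbs := Int.natAbs_sum_le _ _
      _ ≤ ∑ i, (w i).natAbs * m := sum_le_sum fun i _ => by
          rw [Int.natAbs_mul, Int.natAbs_natCast]; exact Nat.mul_le_mul_left _ (hy i j).le
      _ = (∑ i, (w i).natAbs) * m := (sum_mul _ _ _).symm
      _ < q := hq
  refine congrFun (eq_zero_of_sum_mul_pow_eq_zero hbound ?_) j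
  simp only [map_apply, Nat.cast_sum, Nat.cast_mul, Nat.cast_pow, Finset.mul_sum] at h
  rw [Finset.sum_comm] at h
  simpa [Finset.sum_mul, mul_assoc] using h

theorem eq_of_mem_image_sphere_of_sum_signedVandermondeMinor_mul_eq_zero {N m R q : ℕ}
    {a : Fin 5 → ℤ} (ha : Function.Injective a)
    (hq₁ : (∑ i, (signedVandermondeMinor (fun i => a i.castSucc) i).natAbs) * m < q)
    (hq₂ : (∑ i, (signedVandermondeMinor (fun i => a i.succ) i).natAbs) * m < q)
    {b : Fin 5 → ℕ} (hb : ∀ i, b i ∈ (sphere N m R).image (map q))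
    (h₁ : ∑ i, signedVandermondeMinor (fun i => a i.castSucc) i * (b i.castSucc : ℤ) = 0)
    (h₂ : ∑ i, signedVandermondeMinor (fun i => a i.succ) i * (b i.succ : ℤ) = 0) (i j : Fin 5) :
    b i = b j := by
  choose y hy hyb using fun i => Finset.mem_image.1 (hb i)
  have hbox (i : Fin 5) (t : Fin N) : y i t < m := mem_box.1 (sphere_subset_box (hy i)) t
  have hdigit₁ := sum_mul_digit_eq_zero_of_sum_mul_map_eq_zero hq₁ (fun i => hbox i.castSucc)
    (by simpa only [hyb] using h₁)
  have hdigit₂ := sum_mul_digit_eq_zero_of_sum_mul_map_eq_zero hq₂ (fun i => hbox i.succ)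
    (by simpa only [hyb] using h₂)
  have hpoly (t : Fin N) : ∃ P : ℝ[X], P.degree < 3 ∧ ∀ i, (y i t : ℝ) = P.eval (a i : ℝ) := by
    refine exists_eval_eq_of_sum_signedVandermondeMinor_mul_eq_zero
      (a := fun i => (a i : ℝ)) (Int.cast_injective.comp ha) ?_ ?_
    · exact_mod_cast hdigit₁ t
    · exact_mod_cast hdigit₂ t
  choose P hPdeg hP using hpoly
  have hsphere (i : Fin 5) : ∑ t, (P t).eval (a i : ℝ) ^ 2 = R := by
    simp_rw [← hP]
    exact_mod_cast (Finset.mem_filter.1 (hy i)).2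
  have hconst (t : Fin N) : (P t).degree ≤ 0 :=
    degree_le_zero_of_sum_sq_eval_eq (Int.cast_injective.comp ha)
      (fun t _ => natDegree_le_of_degree_le (Order.le_of_lt_succ (hPdeg t))) (by simp) hsphere
      (mem_univ t)
  rw [← hyb i, ← hyb j]
  congr 1
  ext t
  have : (y i t : ℝ) = y j t := by
    rw [hP t i, hP t j, eq_C_of_degree_le_zero (hconst t), eval_C, eval_C]
  exact_mod_cast this

end Behrend

lemma rpow_one_sub_mul_lt_pow {K L e : ℝ} {s n : ℕ} (hK : 1 ≤ K) (he : e < 1)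
    (hse : 3 ≤ e * s) (hn : 3 * s ≤ n) (hnK : n ≤ K ^ n) (hL : 0 ≤ L)
    (hLK : L < K ^ ((s + 1) * (n + 1))) : L ^ (1 - e) * (n * K ^ (2 * s)) < K ^ (s * n) := by
  have he₀ : 0 < e := by nlinarith [(Nat.cast_nonneg s : (0 : ℝ) ≤ s)]
  have hexp : ((s + 1) * (n + 1) : ℝ) * (1 - e) + n + 2 * s ≤ s * n := by
    have : (3 * s : ℝ) ≤ n := by exact_mod_cast hn
    nlinarith [mul_le_mul_of_nonneg_right hse (by positivity : (0 : ℝ) ≤ n + 1),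
      mul_nonneg he₀.le (by positivity : (0 : ℝ) ≤ n + 1)]
  calc L ^ (1 - e) * (n * K ^ (2 * s))
      ≤ L ^ (1 - e) * (K ^ n * K ^ (2 * s)) := by gcongr
    _ < (K ^ ((s + 1) * (n + 1))) ^ (1 - e) * (K ^ n * K ^ (2 * s)) := by gcongr
    _ = K ^ (((s + 1) * (n + 1) : ℝ) * (1 - e) + n + 2 * s) := by
        rw [Real.rpow_add (by positivity), Real.rpow_add (by positivity), mul_assoc,
          ← Real.rpow_natCast_mul (by positivity)]
        norm_cast
    _ ≤ K ^ (s * n : ℝ) := Real.rpow_le_rpow_of_exponent_le hK hexp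
    _ = K ^ (s * n) := by norm_cast

lemma exists_pow_le_and_rpow_lt_div {K : ℕ} (hK : 2 ≤ K) {ε : ℝ} (hε : 0 < ε) :
    ∃ m > 0, ∃ L₀ : ℕ, ∀ L ≥ L₀, ∃ n : ℕ, (K * m) ^ n ≤ L ∧
      (L : ℝ) ^ (1 - ε) < ((m ^ n : ℕ) : ℝ) / ((n * m ^ 2 : ℕ) : ℝ) := by
  set e := min ε (1 / 2)
  have he : 0 < e := lt_min hε one_half_pos
  set s := ⌈3 / e⌉₊
  have hse : 3 ≤ e * s := (div_le_iff₀' he).1 (Nat.le_ceil _)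
  have hs : 1 ≤ s := by exact_mod_cast (show (1 : ℝ) ≤ s by nlinarith [min_le_right ε (1 / 2)])
  set m := K ^ s with hm_def
  have hm : 0 < m := by positivity
  have hKm : 1 < K * m := by nlinarith
  refine ⟨m, hm, (K * m) ^ (3 * s), fun L hL => ?_⟩
  have hL₀ : L ≠ 0 := ((pow_pos (by omega) _).trans_le hL).ne'
  set n := Nat.log (K * m) L
  have hn : 3 * s ≤ n := Nat.le_log_of_pow_le hKm hL
  refine ⟨n, Nat.pow_log_le_self _ hL₀, ?_⟩
  have hLK : (L : ℝ) < (K : ℝ) ^ ((s + 1) * (n + 1)) := by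
    rw [pow_mul, pow_succ' (K : ℝ) s]
    exact_mod_cast Nat.lt_pow_succ_log_self hKm L
  have hL₁ : (1 : ℝ) ≤ L := by exact_mod_cast Nat.one_le_iff_ne_zero.2 hL₀
  rw [lt_div_iff₀ (by exact_mod_cast Nat.mul_pos (by omega) (pow_pos hm 2))]
  calc (L : ℝ) ^ (1 - ε) * ((n * m ^ 2 : ℕ) : ℝ)
      ≤ (L : ℝ) ^ (1 - e) * (n * (K : ℝ) ^ (2 * s)) := by
        rw [hm_def]
        push_cast
        rw [← pow_mul, mul_comm s 2]
        gcongr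
        exact min_le_left _ _
    _ < (K : ℝ) ^ (s * n) := rpow_one_sub_mul_lt_pow (by exact_mod_cast (by omega : 1 ≤ K))
        (by linarith [min_le_right ε (1 / 2)]) hse hn (by exact_mod_cast (Nat.lt_pow_self hK).le)
        (by positivity) hLK
    _ = ((m ^ n : ℕ) : ℝ) := by
        rw [hm_def]
        push_cast
        rw [pow_mul]

theorem ruzsa_type_set_exists
    (a : Fin 5 → ℤ) (ha : StrictMono a)
    (v vt : Fin 4 → ℤ)
    (hv : ∀ i : Fin 4, v i = (-1) ^ ((i : ℕ) + 1) *
      (Matrix.of fun (j k : Fin 3) =>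
        (fun j' : Fin 4 => a j'.castSucc) (i.succAbove j) ^ (k : ℕ)).det)
    (hvt : ∀ i : Fin 4, vt i = (-1) ^ ((i : ℕ) + 1) *
      (Matrix.of fun (j k : Fin 3) =>
        (fun j' : Fin 4 => a j'.succ) (i.succAbove j) ^ (k : ℕ)).det) :
    ∀ ε : ℝ, 0 < ε → ∃ L₀ : ℕ, ∀ L : ℕ, L₀ ≤ L →
      ∃ Λ : Finset ℕ, (∀ x ∈ Λ, x < L) ∧ (Λ.card : ℝ) > (L : ℝ) ^ (1 - ε) ∧
        ∀ b : Fin 5 → ℕ, (∀ i, b i ∈ Λ) →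
          (∑ i : Fin 4, v i * (b i.castSucc : ℤ)) = 0 →
          (∑ i : Fin 4, vt i * (b i.succ : ℤ)) = 0 →
          ∀ i j, b i = b j := by
  have hv' : v = signedVandermondeMinor (fun i => a i.castSucc) := funext hv
  have hvt' : vt = signedVandermondeMinor (fun i => a i.succ) := funext hvt
  intro ε hε
  set M := ∑ i, (v i).natAbs + ∑ i, (vt i).natAbs
  obtain ⟨m, hm, L₀, hL₀⟩ := exists_pow_le_and_rpow_lt_div (K := M + 2) (by omega) hε
  refine ⟨L₀, fun L hL => ?_⟩
  obtain ⟨n, hnL, hcard⟩ := hL₀ L hL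
  obtain ⟨R, hR⟩ := Behrend.exists_large_sphere n m
  have hbox {x : Fin n → ℕ} (hx : x ∈ Behrend.sphere n m R) (i : Fin n) : x i < (M + 2) * m :=
    (Behrend.mem_box.1 (Behrend.sphere_subset_box hx) i).trans_le (by nlinarith)
  refine ⟨(Behrend.sphere n m R).image (Behrend.map ((M + 2) * m)), ?_, ?_, ?_⟩
  · simp only [mem_image]
    rintro _ ⟨x, hx, rfl⟩
    exact (Behrend.map_lt_pow (hbox hx)).trans_le hnL
  · rw [card_image_of_injOn (Behrend.map_injOn.mono fun x hx => hbox hx)]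
    linarith
  · intro b hb h₁ h₂
    subst hv' hvt'
    have hMq {M'} (hM' : M' ≤ M) : M' * m < (M + 2) * m := by nlinarith
    exact Behrend.eq_of_mem_image_sphere_of_sum_signedVandermondeMinor_mul_eq_zero ha.injective
      (hMq (Nat.le_add_right _ _)) (hMq (Nat.le_add_left _ _)) hb h₁ h₂
end

section
/- Let a₁ < a₂ < a₃ < a₄ < a₅ be integers. For i = 1, …, 4, let v_i be (−1)^i times the determinant of the 3×3 matrix obtained from the 4×3 matrix (a_j^k)_{1≤j≤4, 0≤k≤2} by deleting the j = i row; for i = 1, …, 4, let ṽ_{i+1} be (−1)^i times the determinant of the 3×3 matrix obtained from the 4×3 matrix (a_{j+1}^k)_{1≤j≤4, 0≤k≤2} by deleting the j = i row. Let d ∈ ℕ and let b₁, …, b₅ ∈ ℝ^d all have the same Euclidean norm. If v₁b₁ + v₂b₂ + v₃b₃ + v₄b₄ = 0 and ṽ₂b₂ + ṽ₃b₃ + ṽ₄b₄ + ṽ₅b₅ = 0, then b₁ = b₂ = b₃ = b₄ = b₅. -/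
open RealInnerProductSpace Polynomial

set_option maxHeartbeats 1000000

theorem same_norm_solutions_are_constant
    (a : Fin 5 → ℤ) (ha : StrictMono a)
    (v vt : Fin 4 → ℤ)
    (hv : ∀ i : Fin 4, v i = (-1) ^ ((i : ℕ) + 1) *
      (Matrix.of fun (j k : Fin 3) =>
        (fun j' : Fin 4 => a j'.castSucc) (i.succAbove j) ^ (k : ℕ)).det)
    (hvt : ∀ i : Fin 4, vt i = (-1) ^ ((i : ℕ) + 1) *
      (Matrix.of fun (j k : Fin 3) =>
        (fun j' : Fin 4 => a j'.succ) (i.succAbove j) ^ (k : ℕ)).det)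
    (d : ℕ) (b : Fin 5 → EuclideanSpace ℝ (Fin d))
    (hnorm : ∀ i j, ‖b i‖ = ‖b j‖)
    (h1 : ∑ i : Fin 4, (v i : ℝ) • b i.castSucc = 0)
    (h2 : ∑ i : Fin 4, (vt i : ℝ) • b i.succ = 0) :
    ∀ i j, b i = b j := by
  -- real node values
  set A : Fin 5 → ℝ := fun i => (a i : ℝ) with hA_def
  have hAmono : StrictMono A := fun i j hij => by
    simp only [hA_def]; exact_mod_cast ha hij
  -- explicit formulas for v and vt
  have hvex : v 0 = -((a 2 - a 1) * (a 3 - a 1) * (a 3 - a 2)) ∧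
      v 1 = (a 2 - a 0) * (a 3 - a 0) * (a 3 - a 2) ∧
      v 2 = -((a 1 - a 0) * (a 3 - a 0) * (a 3 - a 1)) ∧
      v 3 = (a 1 - a 0) * (a 2 - a 0) * (a 2 - a 1) := by
    refine ⟨?_, ?_, ?_, ?_⟩ <;>
    · rw [hv]
      simp only [Matrix.det_fin_three, Matrix.of_apply,
        show ((0:Fin 4).succAbove 0).castSucc = (1:Fin 5) from rfl,
        show ((0:Fin 4).succAbove 1).castSucc = (2:Fin 5) from rfl,
        show ((0:Fin 4).succAbove 2).castSucc = (3:Fin 5) from rfl,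
        show ((1:Fin 4).succAbove 0).castSucc = (0:Fin 5) from rfl,
        show ((1:Fin 4).succAbove 1).castSucc = (2:Fin 5) from rfl,
        show ((1:Fin 4).succAbove 2).castSucc = (3:Fin 5) from rfl,
        show ((2:Fin 4).succAbove 0).castSucc = (0:Fin 5) from rfl,
        show ((2:Fin 4).succAbove 1).castSucc = (1:Fin 5) from rfl,
        show ((2:Fin 4).succAbove 2).castSucc = (3:Fin 5) from rfl,
        show ((3:Fin 4).succAbove 0).castSucc = (0:Fin 5) from rfl,
        show ((3:Fin 4).succAbove 1).castSucc = (1:Fin 5) from rfl,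
        show ((3:Fin 4).succAbove 2).castSucc = (2:Fin 5) from rfl,
        show (((0:Fin 4):ℕ)) = 0 from rfl, show (((1:Fin 4):ℕ)) = 1 from rfl,
        show (((2:Fin 4):ℕ)) = 2 from rfl, show (((3:Fin 4):ℕ)) = 3 from rfl,
        show (((0:Fin 3):ℕ)) = 0 from rfl, show (((1:Fin 3):ℕ)) = 1 from rfl,
        show (((2:Fin 3):ℕ)) = 2 from rfl]
      ring
  have hvtex : vt 0 = -((a 3 - a 2) * (a 4 - a 2) * (a 4 - a 3)) ∧
      vt 1 = (a 3 - a 1) * (a 4 - a 1) * (a 4 - a 3) ∧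
      vt 2 = -((a 2 - a 1) * (a 4 - a 1) * (a 4 - a 2)) ∧
      vt 3 = (a 2 - a 1) * (a 3 - a 1) * (a 3 - a 2) := by
    refine ⟨?_, ?_, ?_, ?_⟩ <;>
    · rw [hvt]
      simp only [Matrix.det_fin_three, Matrix.of_apply,
        show ((0:Fin 4).succAbove 0).succ = (2:Fin 5) from rfl,
        show ((0:Fin 4).succAbove 1).succ = (3:Fin 5) from rfl,
        show ((0:Fin 4).succAbove 2).succ = (4:Fin 5) from rfl,
        show ((1:Fin 4).succAbove 0).succ = (1:Fin 5) from rfl,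
        show ((1:Fin 4).succAbove 1).succ = (3:Fin 5) from rfl,
        show ((1:Fin 4).succAbove 2).succ = (4:Fin 5) from rfl,
        show ((2:Fin 4).succAbove 0).succ = (1:Fin 5) from rfl,
        show ((2:Fin 4).succAbove 1).succ = (2:Fin 5) from rfl,
        show ((2:Fin 4).succAbove 2).succ = (4:Fin 5) from rfl,
        show ((3:Fin 4).succAbove 0).succ = (1:Fin 5) from rfl,
        show ((3:Fin 4).succAbove 1).succ = (2:Fin 5) from rfl,
        show ((3:Fin 4).succAbove 2).succ = (3:Fin 5) from rfl,
        show (((0:Fin 4):ℕ)) = 0 from rfl, show (((1:Fin 4):ℕ)) = 1 from rfl,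
        show (((2:Fin 4):ℕ)) = 2 from rfl, show (((3:Fin 4):ℕ)) = 3 from rfl,
        show (((0:Fin 3):ℕ)) = 0 from rfl, show (((1:Fin 3):ℕ)) = 1 from rfl,
        show (((2:Fin 3):ℕ)) = 2 from rfl]
      ring
  obtain ⟨hv0, hv1, hv2, hv3⟩ := hvex
  obtain ⟨hvt0, hvt1, hvt2, hvt3⟩ := hvtex
  -- real versions
  have hv0R : (v 0 : ℝ) = -((A 2 - A 1) * (A 3 - A 1) * (A 3 - A 2)) := by
    rw [hv0]; push_cast; ring
  have hv1R : (v 1 : ℝ) = (A 2 - A 0) * (A 3 - A 0) * (A 3 - A 2) := by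
    rw [hv1]; push_cast; ring
  have hv2R : (v 2 : ℝ) = -((A 1 - A 0) * (A 3 - A 0) * (A 3 - A 1)) := by
    rw [hv2]; push_cast; ring
  have hv3R : (v 3 : ℝ) = (A 1 - A 0) * (A 2 - A 0) * (A 2 - A 1) := by
    rw [hv3]; push_cast; ring
  have hvt0R : (vt 0 : ℝ) = -((A 3 - A 2) * (A 4 - A 2) * (A 4 - A 3)) := by
    rw [hvt0]; push_cast; ring
  have hvt1R : (vt 1 : ℝ) = (A 3 - A 1) * (A 4 - A 1) * (A 4 - A 3) := by
    rw [hvt1]; push_cast; ring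
  have hvt2R : (vt 2 : ℝ) = -((A 2 - A 1) * (A 4 - A 1) * (A 4 - A 2)) := by
    rw [hvt2]; push_cast; ring
  have hvt3R : (vt 3 : ℝ) = (A 2 - A 1) * (A 3 - A 1) * (A 3 - A 2) := by
    rw [hvt3]; push_cast; ring
  -- nonvanishing of differences
  have hne : ∀ i j : Fin 5, i ≠ j → A i - A j ≠ 0 := by
    intro i j hij
    rcases lt_or_gt_of_ne hij with h | h
    · exact ne_of_lt (sub_neg.mpr (hAmono h))
    · exact ne_of_gt (sub_pos.mpr (hAmono h))
  have h01 := hne 0 1 (by decide); have h02 := hne 0 2 (by decide)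
  have h03 := hne 0 3 (by decide); have h12 := hne 1 2 (by decide)
  have h13 := hne 1 3 (by decide); have h23 := hne 2 3 (by decide)
  have h21 := hne 2 1 (by decide); have h31 := hne 3 1 (by decide)
  have h32 := hne 3 2 (by decide); have h41 := hne 4 1 (by decide)
  have h42 := hne 4 2 (by decide); have h43 := hne 4 3 (by decide)
  have hv0ne : (v 0 : ℝ) ≠ 0 := by
    rw [hv0R]
    intro h
    rcases mul_eq_zero.mp (neg_eq_zero.mp h) with h' | h'
    · rcases mul_eq_zero.mp h' with h'' | h''
      · exact h21 h''
      · exact h31 h''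
    · exact h32 h'
  have hvt3ne : (vt 3 : ℝ) ≠ 0 := by
    rw [hvt3R]
    intro h
    rcases mul_eq_zero.mp h with h' | h'
    · rcases mul_eq_zero.mp h' with h'' | h''
      · exact h21 h''
      · exact h31 h''
    · exact h32 h'
  -- expand the two hypotheses
  rw [Fin.sum_univ_four] at h1 h2
  simp only [show (0:Fin 4).castSucc = (0:Fin 5) from rfl,
    show (1:Fin 4).castSucc = (1:Fin 5) from rfl,
    show (2:Fin 4).castSucc = (2:Fin 5) from rfl,
    show (3:Fin 4).castSucc = (3:Fin 5) from rfl] at h1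
  simp only [show (0:Fin 4).succ = (1:Fin 5) from rfl,
    show (1:Fin 4).succ = (2:Fin 5) from rfl,
    show (2:Fin 4).succ = (3:Fin 5) from rfl,
    show (3:Fin 4).succ = (4:Fin 5) from rfl] at h2
  -- the interpolating quadratic through b 1, b 2, b 3 at nodes A 1, A 2, A 3
  set u : EuclideanSpace ℝ (Fin d) :=
      (((A 1 - A 2) * (A 1 - A 3))⁻¹) • b 1 + (((A 2 - A 1) * (A 2 - A 3))⁻¹) • b 2 +
        (((A 3 - A 1) * (A 3 - A 2))⁻¹) • b 3 with hu_def
  set w : EuclideanSpace ℝ (Fin d) :=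
      (-(A 2 + A 3) / ((A 1 - A 2) * (A 1 - A 3))) • b 1 +
        (-(A 1 + A 3) / ((A 2 - A 1) * (A 2 - A 3))) • b 2 +
        (-(A 1 + A 2) / ((A 3 - A 1) * (A 3 - A 2))) • b 3 with hw_def
  set z : EuclideanSpace ℝ (Fin d) :=
      ((A 2 * A 3) / ((A 1 - A 2) * (A 1 - A 3))) • b 1 +
        ((A 1 * A 3) / ((A 2 - A 1) * (A 2 - A 3))) • b 2 +
        ((A 1 * A 2) / ((A 3 - A 1) * (A 3 - A 2))) • b 3 with hz_def
  have hP1 : (A 1)^2 • u + (A 1) • w + z = b 1 := by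
    rw [hu_def, hw_def, hz_def]
    match_scalars <;> (field_simp; try ring)
  have hP2 : (A 2)^2 • u + (A 2) • w + z = b 2 := by
    rw [hu_def, hw_def, hz_def]
    match_scalars <;> (field_simp; try ring)
  have hP3 : (A 3)^2 • u + (A 3) • w + z = b 3 := by
    rw [hu_def, hw_def, hz_def]
    match_scalars <;> (field_simp; try ring)
  have hP0 : (A 0)^2 • u + (A 0) • w + z = b 0 := by
    have key : (v 0 : ℝ) • ((A 0)^2 • u + (A 0) • w + z) +
        ((v 1 : ℝ) • b 1 + (v 2 : ℝ) • b 2 + (v 3 : ℝ) • b 3) = 0 := by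
      rw [hu_def, hw_def, hz_def]
      match_scalars
      · rw [hv0R, hv1R]; field_simp; ring
      · rw [hv0R, hv2R]; field_simp; ring
      · rw [hv0R, hv3R]; field_simp; ring
    have key2 : (v 0 : ℝ) • ((A 0)^2 • u + (A 0) • w + z) = (v 0 : ℝ) • b 0 := by
      have h1' : (v 0 : ℝ) • b 0 + ((v 1 : ℝ) • b 1 + (v 2 : ℝ) • b 2 + (v 3 : ℝ) • b 3) = 0 := by
        linear_combination (norm := module) h1
      linear_combination (norm := module) key - h1'
    exact smul_right_injective _ hv0ne key2
  have hP4 : (A 4)^2 • u + (A 4) • w + z = b 4 := by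
    have key : (vt 3 : ℝ) • ((A 4)^2 • u + (A 4) • w + z) +
        ((vt 0 : ℝ) • b 1 + (vt 1 : ℝ) • b 2 + (vt 2 : ℝ) • b 3) = 0 := by
      rw [hu_def, hw_def, hz_def]
      match_scalars
      · rw [hvt3R, hvt0R]; field_simp; ring
      · rw [hvt3R, hvt1R]; field_simp; ring
      · rw [hvt3R, hvt2R]; field_simp; ring
    have key2 : (vt 3 : ℝ) • ((A 4)^2 • u + (A 4) • w + z) = (vt 3 : ℝ) • b 4 := by
      have h2' : (vt 3 : ℝ) • b 4 + ((vt 0 : ℝ) • b 1 + (vt 1 : ℝ) • b 2 + (vt 2 : ℝ) • b 3) = 0 := by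
        linear_combination (norm := module) h2
      linear_combination (norm := module) key - h2'
    exact smul_right_injective _ hvt3ne key2
  -- common norm
  set c : ℝ := ‖b 0‖ with hc_def
  have hnc : ∀ i : Fin 5, ‖b i‖ = c := fun i => hnorm i 0
  -- norm of quadratic values
  have hexp : ∀ t : ℝ, ‖t^2 • u + t • w + z‖^2 =
      ⟪u, u⟫ * t^4 + 2 * ⟪u, w⟫ * t^3 + (⟪w, w⟫ + 2 * ⟪u, z⟫) * t^2 +
        2 * ⟪w, z⟫ * t + ⟪z, z⟫ := by
    intro t
    rw [← real_inner_self_eq_norm_sq]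
    simp only [inner_add_left, inner_add_right, real_inner_smul_left, real_inner_smul_right]
    rw [real_inner_comm w u, real_inner_comm z u, real_inner_comm z w]
    ring
  -- the polynomial
  set q : ℝ[X] := C ⟪u, u⟫ * X^4 + C (2 * ⟪u, w⟫) * X^3 + C (⟪w, w⟫ + 2 * ⟪u, z⟫) * X^2 +
      C (2 * ⟪w, z⟫) * X + C (⟪z, z⟫ - c^2) with hq_def
  have heval : ∀ i : Fin 5, q.eval (A i) = 0 := by
    have key : ∀ (t : ℝ) (i : Fin 5), t^2 • u + t • w + z = b i → q.eval t = 0 := by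
      intro t i hti
      have : ‖t^2 • u + t • w + z‖^2 = c^2 := by rw [hti, hnc i]
      rw [hexp t] at this
      rw [hq_def]
      simp only [eval_add, eval_mul, eval_pow, eval_C, eval_X]
      linarith
    intro i
    fin_cases i
    · exact key _ 0 hP0
    · exact key _ 1 hP1
    · exact key _ 2 hP2
    · exact key _ 3 hP3
    · exact key _ 4 hP4
  have hqdeg : q.natDegree < 5 := by
    have : q.natDegree ≤ 4 := by
      rw [hq_def]
      compute_degree
    omega
  have hq0 : q = 0 := by
    refine Polynomial.eq_zero_of_natDegree_lt_card_of_eval_eq_zero q hAmono.injective heval ?_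
    simpa using hqdeg
  have hu0 : u = 0 := by
    have h4 := congrArg (fun p => Polynomial.coeff p 4) hq0
    simp only [hq_def, Polynomial.coeff_add, Polynomial.coeff_C_mul, Polynomial.coeff_X_pow,
      Polynomial.coeff_C, Polynomial.coeff_X, Polynomial.coeff_zero, reduceIte,
      mul_one, mul_zero, add_zero, zero_add] at h4
    norm_num [-PiLp.inner_apply] at h4
    exact h4
  have hw0 : w = 0 := by
    have h2c := congrArg (fun p => Polynomial.coeff p 2) hq0
    simp only [hq_def, Polynomial.coeff_add, Polynomial.coeff_C_mul, Polynomial.coeff_X_pow,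
      Polynomial.coeff_C, Polynomial.coeff_X, Polynomial.coeff_zero, reduceIte,
      mul_one, mul_zero, add_zero, zero_add] at h2c
    norm_num [-PiLp.inner_apply, hu0] at h2c
    exact h2c
  have hz0 : b 0 = z := by rw [← hP0, hu0, hw0]; simp
  have hz1 : b 1 = z := by rw [← hP1, hu0, hw0]; simp
  have hz2 : b 2 = z := by rw [← hP2, hu0, hw0]; simp
  have hz3 : b 3 = z := by rw [← hP3, hu0, hw0]; simp
  have hz4 : b 4 = z := by rw [← hP4, hu0, hw0]; simp
  have hall : ∀ i : Fin 5, b i = z := by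
    intro i
    fin_cases i
    · exact hz0
    · exact hz1
    · exact hz2
    · exact hz3
    · exact hz4
  intro i j
  rw [hall i, hall j]
end

section
/- Let m, d, ℓ ∈ ℕ with ℓ > d, let C > 0, and let V ⊆ ℚ^d be a linear subspace containing the vector (1, 1, …, 1). Suppose that there exists N₀ such that for every N ≥ N₀ and every subset E ⊆ [N]^m one has D_{m,N}(V^m, E) ≥ C · d_{m,N}(E)^ℓ. Then there exists N₁ such that for every N ≥ N₁ and every function c : [N]^m → [0, 1], one has (1/|V ∩ [N]^d|^m) Σ c(a₁)c(a₂)⋯c(a_d) ≥ C ‖c‖_{L^{d/ℓ}_w}^d, where the sum is over all tuples (a₁, …, a_d) with each a_i ∈ [N]^m such that (a₁(j), …, a_d(j)) ∈ V for every coordinate j ∈ {1, …, m}. -/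
/-- `q : Fin d → Fin m → ℕ` satisfies the condition `V^m`: for every coordinate `j`,
the vector `(q 0 j, …, q (d-1) j)` lies in `V`. -/
def inVm {d m : ℕ} (V : Submodule ℚ (Fin d → ℚ)) (q : Fin d → Fin m → ℕ) : Prop :=
  ∀ j : Fin m, (fun i : Fin d => ((q i j : ℕ) : ℚ)) ∈ V

/-- The number of points of `[N]^d` lying in `V`. -/
noncomputable def VboxCard {d : ℕ} (V : Submodule ℚ (Fin d → ℚ)) (N : ℕ) : ℕ :=
  Set.ncard {x : Fin d → ℕ | (∀ i, x i < N) ∧ (fun i : Fin d => ((x i : ℕ) : ℚ)) ∈ V}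

/-- The density `d_{m,N}(E) = |E| / N^m`. -/
noncomputable def dmn (m N : ℕ) (E : Set (Fin m → ℕ)) : ℝ :=
  (E.ncard : ℝ) / (N : ℝ) ^ m

/-- The density `D_{m,N}(V^m, E)` of solutions of the linear system determined by `V`
with entries in `E`, among all solutions with entries in `[N]^m`. -/
noncomputable def Dmn {d : ℕ} (V : Submodule ℚ (Fin d → ℚ)) (m N : ℕ)
    (E : Set (Fin m → ℕ)) : ℝ :=
  (Set.ncard {q : Fin d → Fin m → ℕ | (∀ i, q i ∈ E) ∧ inVm V q} : ℝ) /
    (Set.ncard {q : Fin d → Fin m → ℕ | (∀ i j, q i j < N) ∧ inVm V q} : ℝ)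

/-- The normalized sum `(1/|V ∩ [N]^d|^m) Σ c(a₁)⋯c(a_d)` over tuples
`(a₁, …, a_d) ∈ ([N]^m)^d` satisfying the condition `V^m`. -/
noncomputable def solutionAvg {d m : ℕ} (V : Submodule ℚ (Fin d → ℚ)) (N : ℕ)
    (c : (Fin m → ℕ) → ℝ) : ℝ :=
  (∑ᶠ q ∈ {q : Fin d → Fin m → ℕ | (∀ i j, q i j < N) ∧ inVm V q},
      ∏ i : Fin d, c (q i)) / (VboxCard V N : ℝ) ^ m

/-- The weak `L^q` quasinorm of `c : [N]^m → ℝ` with the normalized counting measure. -/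
noncomputable def weakNormBox (m N : ℕ) (q : ℝ) (c : (Fin m → ℕ) → ℝ) : ℝ :=
  ⨆ s : ℝ, if 0 < s then
    s * ((Set.ncard {a : Fin m → ℕ | (∀ j, a j < N) ∧ s < |c a|} : ℝ) / (N : ℝ) ^ m) ^ (1 / q)
  else 0

/-- The `L¹` norm of `c : [N]^m → ℝ` with the normalized counting measure. -/
noncomputable def l1NormBox (m N : ℕ) (c : (Fin m → ℕ) → ℝ) : ℝ :=
  (∑ᶠ a ∈ {a : Fin m → ℕ | ∀ j, a j < N}, |c a|) / (N : ℝ) ^ m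

section Aux

lemma ncard_univ_pi {ι : Type*} [Fintype ι] {α : ι → Type*} (S : ∀ i, Set (α i)) :
    (Set.univ.pi S).ncard = ∏ i, (S i).ncard := by
  rw [← Nat.card_coe_set_eq, Nat.card_congr (Equiv.Set.univPi S), Nat.card_pi]
  simp [Nat.card_coe_set_eq]

lemma ncard_box (m N : ℕ) : Set.ncard {a : Fin m → ℕ | ∀ j, a j < N} = N ^ m := by
  have h : {a : Fin m → ℕ | ∀ j, a j < N} = Set.univ.pi (fun _ : Fin m => Set.Iio N) := by
    ext a; simp [Set.mem_pi]
  rw [h, ncard_univ_pi]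
  simp [← Finset.coe_Iio, Set.ncard_coe_finset]

lemma tup_ncard {d : ℕ} (V : Submodule ℚ (Fin d → ℚ)) (m N : ℕ) :
    Set.ncard {q : Fin d → Fin m → ℕ | (∀ i j, q i j < N) ∧ inVm V q} = VboxCard V N ^ m := by
  classical
  have hinj : Function.Injective (fun q : Fin d → Fin m → ℕ => Function.swap q) := by
    intro a b h
    funext i j
    exact congrFun (congrFun h j) i
  have himg : (fun q : Fin d → Fin m → ℕ => Function.swap q) ''
        {q | (∀ i j, q i j < N) ∧ inVm V q}
      = Set.univ.pi (fun _ : Fin m =>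
          {x : Fin d → ℕ | (∀ i, x i < N) ∧ (fun i : Fin d => ((x i : ℕ) : ℚ)) ∈ V}) := by
    ext f
    constructor
    · rintro ⟨q, ⟨h1, h2⟩, rfl⟩
      intro j _
      exact ⟨fun i => h1 i j, h2 j⟩
    · intro hf
      exact ⟨Function.swap f, ⟨fun i j => (hf j (Set.mem_univ j)).1 i,
        fun j => (hf j (Set.mem_univ j)).2⟩, rfl⟩
  have h := Set.ncard_image_of_injective {q : Fin d → Fin m → ℕ | (∀ i j, q i j < N) ∧ inVm V q} hinj
  rw [himg, ncard_univ_pi] at h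
  rw [← h]
  simp [VboxCard]

lemma box_tup_finite (d m N : ℕ) :
    ({q : Fin d → Fin m → ℕ | ∀ i j, q i j < N}).Finite := by
  have hs : {q : Fin d → Fin m → ℕ | ∀ i j, q i j < N} ⊆
      Set.univ.pi (fun _ : Fin d => {g : Fin m → ℕ | ∀ j, g j < N}) := by
    intro q hq i _
    exact fun j => hq i j
  refine Set.Finite.subset (Set.Finite.pi fun _ => ?_) hs
  have : {g : Fin m → ℕ | ∀ j, g j < N} ⊆ Set.univ.pi (fun _ : Fin m => Set.Iio N) := by
    intro g hg j _; exact hg j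
  exact Set.Finite.subset (Set.Finite.pi fun _ => Set.finite_Iio N) this

end Aux

theorem equivalent_inequalities_one_implies_two
    (m d ℓ : ℕ) (hdℓ : d < ℓ) (C : ℝ) (hC : 0 < C)
    (V : Submodule ℚ (Fin d → ℚ)) (hV1 : (fun _ : Fin d => (1 : ℚ)) ∈ V)
    (hyp : ∃ N₀ : ℕ, ∀ N ≥ N₀, ∀ E : Set (Fin m → ℕ),
      (∀ x ∈ E, ∀ j, x j < N) → Dmn V m N E ≥ C * dmn m N E ^ ℓ) :
    ∃ N₁ : ℕ, ∀ N ≥ N₁, ∀ c : (Fin m → ℕ) → ℝ,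
      (∀ a, c a ∈ Set.Icc (0 : ℝ) 1) →
      solutionAvg V N c ≥ C * weakNormBox m N ((d : ℝ) / ℓ) c ^ d := by
  classical
  obtain ⟨N₀, hyp⟩ := hyp
  refine ⟨max N₀ 1, fun N hN c hc => ?_⟩
  have hN0 : N₀ ≤ N := le_trans (le_max_left _ _) hN
  have hN1 : 1 ≤ N := le_trans (le_max_right _ _) hN
  have hNm : (0:ℝ) < (N:ℝ) ^ m := by
    have : (0:ℝ) < (N:ℝ) := by exact_mod_cast hN1
    positivity
  have hc0 : ∀ a, 0 ≤ c a := fun a => (hc a).1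
  -- basic facts about T
  have hTfin : ({q : Fin d → Fin m → ℕ | (∀ i j, q i j < N) ∧ inVm V q}).Finite :=
    (box_tup_finite d m N).subset (fun q hq => hq.1)
  have hT0 : (fun _ _ => 0 : Fin d → Fin m → ℕ) ∈
      {q : Fin d → Fin m → ℕ | (∀ i j, q i j < N) ∧ inVm V q} := by
    refine ⟨fun i j => hN1, fun j => ?_⟩
    have h0 : (fun i : Fin d => (((fun _ _ => (0:ℕ) : Fin d → Fin m → ℕ) i j : ℕ) : ℚ))
        = (0 : Fin d → ℚ) := by
      funext i; simp
    rw [h0]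
    exact V.zero_mem
  have hnT : (0:ℝ) < (Set.ncard {q : Fin d → Fin m → ℕ | (∀ i j, q i j < N) ∧ inVm V q} : ℝ) := by
    have := (Set.ncard_pos hTfin).2 ⟨_, hT0⟩
    exact_mod_cast this
  -- rewrite solutionAvg
  have hAeq : solutionAvg V N c = (∑ q ∈ hTfin.toFinset, ∏ i, c (q i)) /
      (Set.ncard {q : Fin d → Fin m → ℕ | (∀ i j, q i j < N) ∧ inVm V q} : ℝ) := by
    have h1 := finsum_mem_coe_finset (fun q : Fin d → Fin m → ℕ => ∏ i, c (q i)) hTfin.toFinset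
    rw [hTfin.coe_toFinset] at h1
    rw [solutionAvg, h1, tup_ncard V m N]
    push_cast
    ring_nf
  have hA0 : 0 ≤ solutionAvg V N c := by
    rw [hAeq]
    exact div_nonneg (Finset.sum_nonneg fun q _ => Finset.prod_nonneg fun i _ => hc0 _) hnT.le
  -- key estimate
  have key : ∀ s : ℝ, 0 < s →
      C * (s ^ d *
        ((Set.ncard {a : Fin m → ℕ | (∀ j, a j < N) ∧ s < |c a|} : ℝ) / (N : ℝ) ^ m) ^ ℓ)
      ≤ solutionAvg V N c := by
    intro s hs
    have hDE := hyp N hN0 {a : Fin m → ℕ | (∀ j, a j < N) ∧ s < |c a|} (fun x hx j => hx.1 j)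
    rw [ge_iff_le, Dmn, dmn] at hDE
    have hTEsub : {q : Fin d → Fin m → ℕ |
          (∀ i, q i ∈ {a : Fin m → ℕ | (∀ j, a j < N) ∧ s < |c a|}) ∧ inVm V q} ⊆
        {q : Fin d → Fin m → ℕ | (∀ i j, q i j < N) ∧ inVm V q} :=
      fun q hq => ⟨fun i j => (hq.1 i).1 j, hq.2⟩
    have hTEfin := hTfin.subset hTEsub
    have hsub : hTEfin.toFinset ⊆ hTfin.toFinset := by
      rw [Set.Finite.toFinset_subset_toFinset]
      exact hTEsub
    have hterm : ∀ q ∈ hTEfin.toFinset, s ^ d ≤ ∏ i, c (q i) := by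
      intro q hq
      rw [Set.Finite.mem_toFinset] at hq
      have hle : ∀ i : Fin d, s ≤ c (q i) := by
        intro i
        have h2 := (hq.1 i).2
        rw [abs_of_nonneg (hc0 (q i))] at h2
        exact h2.le
      calc s ^ d = ∏ _i : Fin d, s := by simp [Finset.prod_const]
        _ ≤ ∏ i, c (q i) := Finset.prod_le_prod (fun _ _ => hs.le) (fun i _ => hle i)
    have hsumTE : (s ^ d) * (Set.ncard {q : Fin d → Fin m → ℕ |
          (∀ i, q i ∈ {a : Fin m → ℕ | (∀ j, a j < N) ∧ s < |c a|}) ∧ inVm V q} : ℝ)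
        ≤ ∑ q ∈ hTEfin.toFinset, ∏ i, c (q i) := by
      have h3 := Finset.card_nsmul_le_sum hTEfin.toFinset (fun q => ∏ i, c (q i)) (s ^ d) hterm
      rw [nsmul_eq_mul] at h3
      rw [Set.ncard_eq_toFinset_card _ hTEfin]
      linarith
    have hsumT : ∑ q ∈ hTEfin.toFinset, ∏ i, c (q i) ≤ ∑ q ∈ hTfin.toFinset, ∏ i, c (q i) :=
      Finset.sum_le_sum_of_subset_of_nonneg hsub
        (fun q _ _ => Finset.prod_nonneg fun i _ => hc0 _)
    rw [hAeq]
    calc C * (s ^ d *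
          ((Set.ncard {a : Fin m → ℕ | (∀ j, a j < N) ∧ s < |c a|} : ℝ) / (N : ℝ) ^ m) ^ ℓ)
        = s ^ d * (C *
          ((Set.ncard {a : Fin m → ℕ | (∀ j, a j < N) ∧ s < |c a|} : ℝ) / (N : ℝ) ^ m) ^ ℓ) := by
          ring
      _ ≤ s ^ d * ((Set.ncard {q : Fin d → Fin m → ℕ |
            (∀ i, q i ∈ {a : Fin m → ℕ | (∀ j, a j < N) ∧ s < |c a|}) ∧ inVm V q} : ℝ) /
            (Set.ncard {q : Fin d → Fin m → ℕ | (∀ i j, q i j < N) ∧ inVm V q} : ℝ)) := by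
          exact mul_le_mul_of_nonneg_left hDE (by positivity)
      _ = (s ^ d * (Set.ncard {q : Fin d → Fin m → ℕ |
            (∀ i, q i ∈ {a : Fin m → ℕ | (∀ j, a j < N) ∧ s < |c a|}) ∧ inVm V q} : ℝ)) /
            (Set.ncard {q : Fin d → Fin m → ℕ | (∀ i j, q i j < N) ∧ inVm V q} : ℝ) := by
          ring
      _ ≤ (∑ q ∈ hTfin.toFinset, ∏ i, c (q i)) /
            (Set.ncard {q : Fin d → Fin m → ℕ | (∀ i j, q i j < N) ∧ inVm V q} : ℝ) := by
          gcongr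
          exact le_trans hsumTE hsumT
  -- split on d = 0
  rcases Nat.eq_zero_or_pos d with hd | hd
  · subst hd
    rw [ge_iff_le, pow_zero, mul_one]
    have hinVm : ∀ q : Fin 0 → Fin m → ℕ, inVm V q := by
      intro q j
      have h0 : (fun i : Fin 0 => ((q i j : ℕ) : ℚ)) = (0 : Fin 0 → ℚ) := Subsingleton.elim _ _
      rw [h0]
      exact V.zero_mem
    have hTuniv : {q : Fin 0 → Fin m → ℕ | (∀ i j, q i j < N) ∧ inVm V q} = Set.univ :=
      Set.eq_univ_of_forall fun q => ⟨fun i => i.elim0, hinVm q⟩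
    have hcard1 : Set.ncard {q : Fin 0 → Fin m → ℕ | (∀ i j, q i j < N) ∧ inVm V q} = 1 := by
      rw [hTuniv, Set.ncard_univ, Nat.card_unique]
    have hnum : (∑ q ∈ hTfin.toFinset, ∏ i : Fin 0, c (q i)) = 1 := by
      have hprod : ∀ q : Fin 0 → Fin m → ℕ, (∏ i : Fin 0, c (q i)) = 1 := fun q => by simp
      rw [Finset.sum_congr rfl (fun q _ => hprod q), Finset.sum_const, nsmul_eq_mul, mul_one,
        ← Set.ncard_eq_toFinset_card _ hTfin, hcard1]
      norm_num
    have hsA : solutionAvg V N c = 1 := by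
      rw [hAeq, hnum, hcard1]
      norm_num
    have hfull := hyp N hN0 {a : Fin m → ℕ | ∀ j, a j < N} (fun x hx => hx)
    rw [ge_iff_le, Dmn, dmn, ncard_box] at hfull
    have hEuniv : {q : Fin 0 → Fin m → ℕ |
        (∀ i, q i ∈ {a : Fin m → ℕ | ∀ j, a j < N}) ∧ inVm V q} = Set.univ :=
      Set.eq_univ_of_forall fun q => ⟨fun i => i.elim0, hinVm q⟩
    rw [hEuniv, Set.ncard_univ, Nat.card_unique, hcard1] at hfull
    have hone : ((N ^ m : ℕ) : ℝ) / (N : ℝ) ^ m = 1 := by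
      rw [Nat.cast_pow]
      field_simp
    rw [hone, one_pow, mul_one] at hfull
    norm_num at hfull
    rw [hsA]
    exact hfull
  · -- main case
    have hd0 : (d:ℝ) ≠ 0 := by positivity
    have hACnn : 0 ≤ solutionAvg V N c / C := div_nonneg hA0 hC.le
    set B : ℝ := (solutionAvg V N c / C) ^ ((d:ℝ)⁻¹) with hB
    have hB0 : 0 ≤ B := Real.rpow_nonneg hACnn _
    have hbound : ∀ s : ℝ, (if 0 < s then
        s * ((Set.ncard {a : Fin m → ℕ | (∀ j, a j < N) ∧ s < |c a|} : ℝ) / (N : ℝ) ^ m)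
          ^ (1 / ((d : ℝ) / ℓ))
        else 0) ≤ B := by
      intro s
      by_cases hs : 0 < s
      · rw [if_pos hs, one_div_div]
        set r : ℝ := (Set.ncard {a : Fin m → ℕ | (∀ j, a j < N) ∧ s < |c a|} : ℝ) / (N : ℝ) ^ m
          with hr
        have hr0 : 0 ≤ r := by positivity
        have hx0 : 0 ≤ s * r ^ ((ℓ:ℝ) / (d:ℝ)) := mul_nonneg hs.le (Real.rpow_nonneg hr0 _)
        have hxd : C * (s * r ^ ((ℓ:ℝ) / (d:ℝ))) ^ d ≤ solutionAvg V N c := by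
          have hpow : (s * r ^ ((ℓ:ℝ) / (d:ℝ))) ^ d = s ^ d * r ^ ℓ := by
            rw [mul_pow, ← Real.rpow_natCast (r ^ ((ℓ:ℝ) / (d:ℝ))) d, ← Real.rpow_mul hr0,
              div_mul_cancel₀ _ hd0, Real.rpow_natCast]
          rw [hpow]
          exact key s hs
        have h1 : (s * r ^ ((ℓ:ℝ) / (d:ℝ))) ^ d ≤ solutionAvg V N c / C :=
          (le_div_iff₀' hC).2 hxd
        have h2 : ((s * r ^ ((ℓ:ℝ) / (d:ℝ))) ^ d) ^ ((d:ℝ)⁻¹) ≤ B :=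
          Real.rpow_le_rpow (by positivity) h1 (by positivity)
        rwa [← Real.rpow_natCast (s * r ^ ((ℓ:ℝ) / (d:ℝ))) d, ← Real.rpow_mul hx0,
          mul_inv_cancel₀ hd0, Real.rpow_one] at h2
      · rw [if_neg hs]
        exact hB0
    have hbdd : BddAbove (Set.range fun s : ℝ => (if 0 < s then
        s * ((Set.ncard {a : Fin m → ℕ | (∀ j, a j < N) ∧ s < |c a|} : ℝ) / (N : ℝ) ^ m)
          ^ (1 / ((d : ℝ) / ℓ))
        else 0)) := ⟨B, by rintro x ⟨s, rfl⟩; exact hbound s⟩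
    have hW0 : 0 ≤ weakNormBox m N ((d : ℝ) / ℓ) c := by
      rw [weakNormBox]
      have h := le_ciSup hbdd (0:ℝ)
      simpa using h
    have hWB : weakNormBox m N ((d : ℝ) / ℓ) c ≤ B := by
      rw [weakNormBox]
      exact Real.iSup_le hbound hB0
    have hpowle : weakNormBox m N ((d : ℝ) / ℓ) c ^ d ≤ B ^ d := pow_le_pow_left₀ hW0 hWB d
    have hBd : B ^ d = solutionAvg V N c / C := by
      rw [hB, ← Real.rpow_natCast ((solutionAvg V N c / C) ^ ((d:ℝ)⁻¹)) d,
        ← Real.rpow_mul hACnn, inv_mul_cancel₀ hd0, Real.rpow_one]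
    rw [ge_iff_le]
    calc C * weakNormBox m N ((d : ℝ) / ℓ) c ^ d ≤ C * (solutionAvg V N c / C) :=
          mul_le_mul_of_nonneg_left (hpowle.trans_eq hBd) hC.le
      _ = solutionAvg V N c := by
          rw [mul_comm, div_mul_cancel₀ _ hC.ne']
end

section
/- Let s and t be positive integers, let m, N ∈ ℕ, and let E ⊆ [N]^m. Then the number of quadruples (x, y, z, w) ∈ E⁴ satisfying s·x + t·z = s·y + t·w (as vectors in ℤ^m, i.e., s(x(j) − y(j)) + t(z(j) − w(j)) = 0 for every coordinate j ∈ {1, …, m}) is at least |E|⁴ / ((s + t)N)^m. -/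
theorem cauchy_schwarz_solution_count
    (s t : ℕ) (hs : 0 < s) (ht : 0 < t) (m N : ℕ)
    (E : Set (Fin m → ℕ)) (hE : ∀ x ∈ E, ∀ j, x j < N) :
    (E.ncard : ℝ) ^ 4 / (((s + t) * N : ℕ) : ℝ) ^ m ≤
      (Set.ncard {q : (Fin m → ℕ) × (Fin m → ℕ) × (Fin m → ℕ) × (Fin m → ℕ) |
        q.1 ∈ E ∧ q.2.1 ∈ E ∧ q.2.2.1 ∈ E ∧ q.2.2.2 ∈ E ∧
        ∀ j, s * q.1 j + t * q.2.2.1 j = s * q.2.1 j + t * q.2.2.2 j} : ℝ) := by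
  classical
  set K := (s + t) * N with hK
  have hfin : E.Finite := by
    apply Set.Finite.subset (Set.Finite.pi (fun _ : Fin m => Set.finite_Iio N))
    intro x hx
    simp only [Set.mem_pi, Set.mem_univ, Set.mem_Iio, forall_true_left]
    exact fun j => hE x hx j
  set F := hfin.toFinset with hF
  set φ : (Fin m → ℕ) × (Fin m → ℕ) → (Fin m → ℕ) :=
    fun p j => s * p.1 j + t * p.2 j with hφ
  set T : Finset (Fin m → ℕ) := Fintype.piFinset (fun _ : Fin m => Finset.range K) with hT
  set P := F ×ˢ F with hP
  have hmapsto : ∀ p ∈ P, φ p ∈ T := by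
    intro p hp
    rw [Finset.mem_product] at hp
    simp only [hT, Fintype.mem_piFinset, Finset.mem_range]
    intro j
    have h1 : p.1 j < N := hE _ (hfin.mem_toFinset.mp hp.1) j
    have h2 : p.2 j < N := hE _ (hfin.mem_toFinset.mp hp.2) j
    have : s * p.1 j + t * p.2 j < s * N + t * N :=
      add_lt_add (mul_lt_mul_of_pos_left h1 hs) (mul_lt_mul_of_pos_left h2 ht)
    calc s * p.1 j + t * p.2 j < s * N + t * N := this
      _ = (s + t) * N := (add_mul s t N).symm
  set Qf := ((P ×ˢ P).filter fun pq => φ pq.1 = φ pq.2) with hQf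
  have hsum : ∑ v ∈ T, (P.filter fun p => φ p = v).card = P.card :=
    (Finset.card_eq_sum_card_fiberwise hmapsto).symm
  have hQcard : Qf.card = ∑ v ∈ T, ((P.filter fun p => φ p = v).card) ^ 2 := by
    rw [Finset.card_eq_sum_card_fiberwise
      (f := fun pq => φ pq.1) (t := T)
      (fun pq hpq => hmapsto pq.1
        (Finset.mem_product.mp (Finset.mem_filter.mp hpq).1).1)]
    refine Finset.sum_congr rfl fun v hv => ?_
    have key : Qf.filter (fun pq => φ pq.1 = v)
        = (P.filter fun p => φ p = v) ×ˢ (P.filter fun p => φ p = v) := by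
      ext pq
      simp only [hQf, Finset.mem_filter, Finset.mem_product]
      constructor
      · rintro ⟨⟨⟨h1, h2⟩, h3⟩, h4⟩
        exact ⟨⟨h1, h4⟩, ⟨h2, h3 ▸ h4⟩⟩
      · rintro ⟨⟨h1, h4⟩, ⟨h2, h5⟩⟩
        exact ⟨⟨⟨h1, h2⟩, h4.trans h5.symm⟩, h4⟩
    rw [key, Finset.card_product, sq]
  -- identify the set with a finset
  set Qf' := ((F ×ˢ F ×ˢ F ×ˢ F).filter fun q =>
    ∀ j, s * q.1 j + t * q.2.2.1 j = s * q.2.1 j + t * q.2.2.2 j) with hQf'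
  have hsetQ : {q : (Fin m → ℕ) × (Fin m → ℕ) × (Fin m → ℕ) × (Fin m → ℕ) |
        q.1 ∈ E ∧ q.2.1 ∈ E ∧ q.2.2.1 ∈ E ∧ q.2.2.2 ∈ E ∧
        ∀ j, s * q.1 j + t * q.2.2.1 j = s * q.2.1 j + t * q.2.2.2 j} = ↑Qf' := by
    ext q
    simp only [Set.mem_setOf_eq, hQf', Finset.coe_filter, Finset.mem_product,
      Set.mem_setOf_eq, hF, Set.Finite.mem_toFinset]
    tauto
  have hQQ : Qf'.card = Qf.card := by
    apply Finset.card_bij (fun q _ => ((q.1, q.2.2.1), (q.2.1, q.2.2.2)))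
    · rintro ⟨x, y, z, w⟩ hq
      simp only [hQf', Finset.mem_filter, Finset.mem_product] at hq
      simp only [hQf, Finset.mem_filter, hP, Finset.mem_product]
      refine ⟨⟨⟨hq.1.1, hq.1.2.2.1⟩, ⟨hq.1.2.1, hq.1.2.2.2⟩⟩, ?_⟩
      funext j
      exact hq.2 j
    · rintro ⟨x, y, z, w⟩ _ ⟨x', y', z', w'⟩ _ h
      simp only [Prod.mk.injEq] at h
      simp [h.1.1, h.1.2, h.2.1, h.2.2]
    · rintro ⟨⟨x, z⟩, ⟨y, w⟩⟩ hq
      refine ⟨(x, y, z, w), ?_, rfl⟩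
      simp only [hQf, Finset.mem_filter, hP, Finset.mem_product] at hq
      simp only [hQf', Finset.mem_filter, Finset.mem_product]
      exact ⟨⟨hq.1.1.1, hq.1.2.1, hq.1.1.2, hq.1.2.2⟩, fun j => congrFun hq.2 j⟩
  have hTcard : T.card = K ^ m := by
    simp [hT, Fintype.card_piFinset]
  have hEcard : E.ncard = F.card := Set.ncard_eq_toFinset_card E hfin
  -- Cauchy–Schwarz in ℝ
  have hCS : ((F.card : ℝ)) ^ 4 ≤ (Qf.card : ℝ) * (K : ℝ) ^ m := by
    have h1 : ((F.card : ℝ)) ^ 4 = ((P.card : ℝ)) ^ 2 := by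
      rw [hP, Finset.card_product]
      push_cast; ring
    rw [h1, ← hsum]
    push_cast
    calc (∑ v ∈ T, ((P.filter fun p => φ p = v).card : ℝ)) ^ 2
        ≤ (T.card : ℝ) * ∑ v ∈ T, ((P.filter fun p => φ p = v).card : ℝ) ^ 2 :=
          sq_sum_le_card_mul_sum_sq
      _ = (Qf.card : ℝ) * (K : ℝ) ^ m := by
          rw [hTcard, hQcard]
          push_cast
          ring
  rw [hsetQ, Set.ncard_coe_finset, hEcard, hQQ]
  rcases Nat.eq_zero_or_pos (K ^ m) with h0 | hpos
  · have hb := pow_eq_zero_iff'.mp h0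
    rw [hb.1, Nat.cast_zero, zero_pow hb.2, div_zero]
    positivity
  · rw [div_le_iff₀ (show (0:ℝ) < ((((s + t) * N : ℕ)) : ℝ) ^ m by exact_mod_cast hpos)]
    calc ((F.card : ℝ)) ^ 4 ≤ (Qf.card : ℝ) * (K : ℝ) ^ m := hCS
      _ = (Qf.card : ℝ) * ((K : ℕ) : ℝ) ^ m := by norm_cast
end
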